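/- arXiv:2111.03410 — 2 statements merged into one kernel-verified Lean document; each statement's English description precedes it below -/
import Mathlib

section
/- Let (s_n)_{n≥0} be a sequence of nonnegative reals with Σ_{n=0}^∞ s_n = S < ∞, and for λ > -1 define θ(x) := Σ_{n=0}^∞ s_n · ζ(1+x, n+1+λ) for x > 0, where ζ is the Hurwitz zeta function. Then lim_{x→0⁺} x·θ(x) = S. -/
/-!
Comparing the series with the telescoping sum of `t ↦ t ^ (-x)` gives, by the mean value theorem,
`q ^ (-x) ≤ x ζ(1 + x, q) ≤ q ^ (-x) + x q ^ (-(1 + x))`, so `x ζ(1 + x, q) → 1` as `x → 0⁺` for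
every `q > 0`. Since `ζ(1 + x, n + 1 + λ) ≤ ζ(1 + x, 1 + λ)`, the terms `s n · x ζ(1 + x, n + 1 + λ)`
are eventually dominated by `2 s n`, and dominated convergence for series gives the limit `∑ s n`.
-/

open Filter Topology Set

/-- The Hurwitz zeta function `ζ(t, q)` for real `t > 1`; for `t ≤ 1` the `tsum` is the junk
value `0`. -/
noncomputable def realHurwitzZeta (t q : ℝ) : ℝ := ∑' m : ℕ, ((m : ℝ) + q) ^ (-t)

theorem hasSum_sub_succ_of_antitone {f : ℕ → ℝ} (hf : Antitone f)
    (hf0 : Tendsto f atTop (𝓝 0)) : HasSum (fun n => f n - f (n + 1)) (f 0) := by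
  rw [hasSum_iff_tendsto_nat_of_nonneg fun n => sub_nonneg.2 (hf n.le_succ)]
  simp_rw [Finset.sum_range_sub']
  simpa using tendsto_const_nhds.sub hf0

theorem rpow_neg_sub_rpow_neg_add_one_mem_Icc {a x : ℝ} (ha : 0 < a) (hx : 0 < x) :
    a ^ (-x) - (a + 1) ^ (-x) ∈ Icc (x * (a + 1) ^ (-(1 + x))) (x * a ^ (-(1 + x))) := by
  have hderiv : ∀ t ∈ Ioo a (a + 1),
      HasDerivAt (fun t : ℝ => -t ^ (-x)) (x * t ^ (-(1 + x))) t := fun t ht =>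
    (Real.hasDerivAt_rpow_const (.inl (ha.trans ht.1).ne')).neg.congr_deriv <| by
      rw [show -x - 1 = -(1 + x) by ring]
      ring
  have hcont : ContinuousOn (fun t : ℝ => -t ^ (-x)) (Icc a (a + 1)) :=
    (continuousOn_id.rpow_const fun t ht => .inl (ha.trans_le ht.1).ne').neg
  obtain ⟨c, hc, hslope⟩ := exists_hasDerivAt_eq_slope _ _ (lt_add_one a) hcont hderiv
  have hdiff : a ^ (-x) - (a + 1) ^ (-x) = x * c ^ (-(1 + x)) := by
    rw [hslope]
    ring
  rw [hdiff]
  exact ⟨mul_le_mul_of_nonneg_left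
      (Real.rpow_le_rpow_of_nonpos (ha.trans hc.1) hc.2.le (by linarith)) hx.le,
    mul_le_mul_of_nonneg_left (Real.rpow_le_rpow_of_nonpos ha hc.1.le (by linarith)) hx.le⟩

theorem summable_nat_add_rpow_neg {t q : ℝ} (hq : 0 ≤ q) (ht : 1 < t) :
    Summable fun m : ℕ => ((m : ℝ) + q) ^ (-t) :=
  ((Real.summable_one_div_nat_add_rpow q t).2 ht).congr fun m => by
    rw [abs_of_nonneg (by positivity), Real.rpow_neg (by positivity), one_div]

theorem hasSum_nat_add_rpow_neg_sub {q x : ℝ} (hq : 0 < q) (hx : 0 < x) :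
    HasSum (fun m : ℕ => ((m : ℝ) + q) ^ (-x) - ((m : ℝ) + q + 1) ^ (-x)) (q ^ (-x)) := by
  have hanti : Antitone fun m : ℕ => ((m : ℝ) + q) ^ (-x) := fun m n hmn =>
    Real.rpow_le_rpow_of_nonpos (by positivity) (by gcongr) (by linarith)
  have hlim : Tendsto (fun m : ℕ => ((m : ℝ) + q) ^ (-x)) atTop (𝓝 0) :=
    (tendsto_rpow_neg_atTop hx).comp
      (tendsto_atTop_add_const_right _ q tendsto_natCast_atTop_atTop)
  simpa [add_right_comm] using hasSum_sub_succ_of_antitone hanti hlim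

namespace realHurwitzZeta

variable {t q x : ℝ}

theorem nonneg (hq : 0 ≤ q) : 0 ≤ realHurwitzZeta t q :=
  tsum_nonneg fun _ => Real.rpow_nonneg (by positivity) _

theorem eq_rpow_neg_add (hq : 0 ≤ q) (ht : 1 < t) :
    realHurwitzZeta t q = q ^ (-t) + realHurwitzZeta t (q + 1) := by
  rw [realHurwitzZeta, (summable_nat_add_rpow_neg hq ht).tsum_eq_zero_add]
  push_cast
  simp only [zero_add, realHurwitzZeta, add_assoc, add_comm (1 : ℝ) q]

theorem antitoneOn (ht : 1 < t) : AntitoneOn (realHurwitzZeta t) (Ioi 0) :=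
  fun q (hq : 0 < q) q' (hq' : 0 < q') hqq' =>
    (summable_nat_add_rpow_neg hq'.le ht).tsum_le_tsum
      (fun _ => Real.rpow_le_rpow_of_nonpos (by positivity) (by gcongr) (by linarith))
      (summable_nat_add_rpow_neg hq.le ht)

theorem rpow_neg_le_mul_one_add (hq : 0 < q) (hx : 0 < x) :
    q ^ (-x) ≤ x * realHurwitzZeta (1 + x) q := by
  have htel := hasSum_nat_add_rpow_neg_sub hq hx
  calc q ^ (-x) = ∑' m : ℕ, (((m : ℝ) + q) ^ (-x) - ((m : ℝ) + q + 1) ^ (-x)) :=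
        htel.tsum_eq.symm
    _ ≤ ∑' m : ℕ, x * ((m : ℝ) + q) ^ (-(1 + x)) :=
        htel.summable.tsum_le_tsum
          (fun m => (rpow_neg_sub_rpow_neg_add_one_mem_Icc (by positivity) hx).2)
          ((summable_nat_add_rpow_neg hq.le (by linarith)).mul_left x)
    _ = x * realHurwitzZeta (1 + x) q := tsum_mul_left

theorem mul_one_add_add_one_le_rpow_neg (hq : 0 < q) (hx : 0 < x) :
    x * realHurwitzZeta (1 + x) (q + 1) ≤ q ^ (-x) := by
  have htel := hasSum_nat_add_rpow_neg_sub hq hx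
  calc x * realHurwitzZeta (1 + x) (q + 1)
        = ∑' m : ℕ, x * ((m : ℝ) + (q + 1)) ^ (-(1 + x)) := tsum_mul_left.symm
    _ ≤ ∑' m : ℕ, (((m : ℝ) + q) ^ (-x) - ((m : ℝ) + q + 1) ^ (-x)) :=
        ((summable_nat_add_rpow_neg (by positivity) (by linarith)).mul_left x).tsum_le_tsum
          (fun m => by
            simpa only [add_assoc] using
              (rpow_neg_sub_rpow_neg_add_one_mem_Icc (a := m + q) (by positivity) hx).1)
          htel.summable
    _ = q ^ (-x) := htel.tsum_eq

theorem tendsto_mul_one_add (hq : 0 < q) :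
    Tendsto (fun x => x * realHurwitzZeta (1 + x) q) (𝓝[>] 0) (𝓝 1) := by
  have hlim : ∀ {g : ℝ → ℝ}, Continuous g → g 0 = 1 → Tendsto g (𝓝[>] 0) (𝓝 1) :=
    fun hg hg0 => hg0 ▸ hg.tendsto 0 |>.mono_left nhdsWithin_le_nhds
  have hcont : Continuous fun x : ℝ => q ^ (-x) := by fun_prop (disch := exact hq.ne')
  refine tendsto_of_tendsto_of_tendsto_of_le_of_le' (hlim hcont (by simp))
    (hlim (g := fun x => q ^ (-x) + x * q ^ (-(1 + x))) (by fun_prop (disch := exact hq.ne'))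
      (by simp)) ?_ ?_
  · filter_upwards [self_mem_nhdsWithin] with x hx using rpow_neg_le_mul_one_add hq hx
  · filter_upwards [self_mem_nhdsWithin] with x hx
    rw [eq_rpow_neg_add hq.le (by linarith [hx.out]), mul_add]
    linarith [mul_one_add_add_one_le_rpow_neg hq hx]

end realHurwitzZeta

/-- If `s_n ≥ 0` with `∑ s_n = S` and `λ > -1`, then for
`θ(x) = ∑_n s_n ζ(1+x, n+1+λ)` one has `lim_{x→0⁺} x θ(x) = S`. -/
theorem residue_formula_scalar (s : ℕ → ℝ) (hpos : ∀ n, 0 ≤ s n) (S : ℝ)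
    (hS : HasSum s S) (lam : ℝ) (hlam : -1 < lam) :
    Tendsto (fun x : ℝ =>
        x * ∑' n : ℕ, s n * ∑' m : ℕ, ((m : ℝ) + ((n : ℝ) + 1 + lam)) ^ (-(1 + x)))
      (𝓝[>] (0 : ℝ)) (𝓝 S) := by
  have hq0 : 0 < 1 + lam := by linarith
  have hq : ∀ n : ℕ, 1 + lam ≤ (n : ℝ) + 1 + lam := fun n => by
    linarith [n.cast_nonneg (α := ℝ)]
  have hqpos : ∀ n : ℕ, 0 < (n : ℝ) + 1 + lam := fun n => hq0.trans_le (hq n)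
  have hbound : ∀ᶠ x in 𝓝[>] 0,
      ∀ n : ℕ, ‖s n * (x * realHurwitzZeta (1 + x) (n + 1 + lam))‖ ≤ s n * 2 := by
    filter_upwards [(realHurwitzZeta.tendsto_mul_one_add hq0).eventually (ge_mem_nhds one_lt_two),
      self_mem_nhdsWithin] with x hx2 (hx : 0 < x) n
    have hle :
        x * realHurwitzZeta (1 + x) (n + 1 + lam) ≤ x * realHurwitzZeta (1 + x) (1 + lam) :=
      mul_le_mul_of_nonneg_left
        (realHurwitzZeta.antitoneOn (by linarith) hq0 (hqpos n) (hq n)) hx.le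
    rw [Real.norm_of_nonneg (mul_nonneg (hpos n)
      (mul_nonneg hx.le (realHurwitzZeta.nonneg (hqpos n).le)))]
    exact mul_le_mul_of_nonneg_left (hle.trans hx2) (hpos n)
  have hdom := tendsto_tsum_of_dominated_convergence (hS.summable.mul_right 2)
    (fun n => (realHurwitzZeta.tendsto_mul_one_add (hqpos n)).const_mul (s n)) hbound
  simp only [mul_one, hS.tsum_eq] at hdom
  refine hdom.congr fun x => ?_
  simp only [realHurwitzZeta, ← tsum_mul_left, mul_left_comm]
end

section
/- Tauberian criterion (scalar version): Let (a_k)_{k≥1} be a nonincreasing sequence of nonnegative reals tending to 0 such that Σ_{k=1}^∞ a_k^s < ∞ for every s > 1, and suppose lim_{s→1⁺} (s−1)·Σ_{k=1}^∞ a_k^s = L. Then lim_{N→∞} (1/log N)·Σ_{k=1}^N a_k = L. -/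
/-!
Karamata's method. Since `ζ(1 + x) = ∑ a_k · a_k ^ x`, the hypothesis at `s = 1 + (m + 1) x` says
`x ∑ a_k ^ (1 + x) (a_k ^ x) ^ m → L / (m + 1)` as `x → 0⁺`, that is,
`x ∑ a_k ^ (1 + x) q (a_k ^ x) → L ∫₀¹ q` for every polynomial `q`. Squeezing
`t ↦ t⁻¹ · 1[e⁻¹ ≤ t]` between polynomials (Weierstrass) turns this into
`(1 / y) ∑_{e^{-y} ≤ a_k} a_k → L` as `y → ∞`. Finally, for `θ < 1 < s`, the partial sum
`∑_{k<N} a_k` is at least this sum at `y = θ log N` (eventually `a_N < N^{-θ}`, by summability of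
`a ^ r` for some `r > 1`) and at most the sum at `y = s log N` plus `N · N^{-s} ≤ 1`.
-/

open Filter Topology

open Real Set
open scoped Polynomial

noncomputable def firstLt (a : ℕ → ℝ) (t : ℝ) : ℕ := sInf {k | a k < t}

section FirstLt

variable {a : ℕ → ℝ} {t : ℝ}

theorem firstLt_le_iff (hmono : Antitone a) (hlim : Tendsto a atTop (𝓝 0)) (ht : 0 < t)
    {k : ℕ} : firstLt a t ≤ k ↔ a k < t := by
  have hne : {k | a k < t}.Nonempty := (hlim.eventually (eventually_lt_nhds ht)).exists
  exact ⟨fun h => (hmono h).trans_lt (Nat.sInf_mem hne), fun h => Nat.sInf_le h⟩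

theorem lt_firstLt_iff (hmono : Antitone a) (hlim : Tendsto a atTop (𝓝 0)) (ht : 0 < t)
    {k : ℕ} : k < firstLt a t ↔ t ≤ a k := by
  rw [← not_le, firstLt_le_iff hmono hlim ht, not_lt]

theorem sum_range_le_sum_range_firstLt_add (hpos : ∀ k, 0 ≤ a k) (hmono : Antitone a)
    (hlim : Tendsto a atTop (𝓝 0)) (ht : 0 < t) (N : ℕ) :
    ∑ k ∈ Finset.range N, a k ≤ ∑ k ∈ Finset.range (firstLt a t), a k + N * t := by
  rcases le_total N (firstLt a t) with hN | hN
  · have := Finset.sum_le_sum_of_subset_of_nonneg (Finset.range_subset_range.2 hN)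
      fun k _ _ => hpos k
    exact le_add_of_le_of_nonneg this (by positivity)
  · rw [← Finset.sum_range_add_sum_Ico _ hN]
    gcongr
    calc ∑ k ∈ Finset.Ico (firstLt a t) N, a k
        ≤ ∑ _k ∈ Finset.Ico (firstLt a t) N, t :=
          Finset.sum_le_sum fun k hk =>
            ((firstLt_le_iff hmono hlim ht).1 (Finset.mem_Ico.1 hk).1).le
      _ ≤ N * t := by
          rw [Finset.sum_const, Nat.card_Ico, nsmul_eq_mul]
          gcongr
          exact_mod_cast N.sub_le _

theorem sum_range_firstLt_le_sum_range (hpos : ∀ k, 0 ≤ a k) (hmono : Antitone a)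
    (hlim : Tendsto a atTop (𝓝 0)) (ht : 0 < t) {N : ℕ} (hN : a N < t) :
    ∑ k ∈ Finset.range (firstLt a t), a k ≤ ∑ k ∈ Finset.range N, a k :=
  Finset.sum_le_sum_of_subset_of_nonneg
    (Finset.range_subset_range.2 ((firstLt_le_iff hmono hlim ht).2 hN)) fun k _ _ => hpos k

end FirstLt

theorem rpow_le_max_one {y x : ℝ} (hy : 0 ≤ y) (hx0 : 0 ≤ x) (hx1 : x ≤ 1) :
    y ^ x ≤ max 1 y := by
  rcases le_total y 1 with h | h
  · exact (rpow_le_one hy h hx0).trans (le_max_left _ _)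
  · exact (rpow_le_rpow_of_exponent_le h hx1).trans (by rw [rpow_one]; exact le_max_right _ _)

theorem rpow_one_add_mul_pow {y : ℝ} (hy : 0 ≤ y) {x : ℝ} (hx : 0 < x) (n : ℕ) :
    y ^ (1 + x) * (y ^ x) ^ n = y ^ (1 + (n + 1) * x) := by
  rw [← rpow_natCast, ← rpow_mul hy, ← rpow_add' hy (by positivity)]
  ring_nf

section MomentLimits

variable {a : ℕ → ℝ}

theorem rpow_mem_Icc_max (hpos : ∀ k, 0 ≤ a k) (hmono : Antitone a) {x : ℝ} (hx0 : 0 ≤ x)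
    (hx1 : x ≤ 1) (k : ℕ) : a k ^ x ∈ Icc 0 (max 1 (a 0)) :=
  ⟨rpow_nonneg (hpos k) x,
    (rpow_le_max_one (hpos k) hx0 hx1).trans (max_le_max le_rfl (hmono k.zero_le))⟩

theorem summable_rpow_mul_eval (hpos : ∀ k, 0 ≤ a k) (hmono : Antitone a)
    (hsum : ∀ s : ℝ, 1 < s → Summable fun k => a k ^ s) {x : ℝ} (hx0 : 0 < x) (hx1 : x ≤ 1)
    (q : ℝ[X]) : Summable fun k => a k ^ (1 + x) * q.eval (a k ^ x) := by
  obtain ⟨C, hC⟩ := isCompact_Icc.exists_bound_of_continuousOn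
    (q.continuous.continuousOn (s := Icc 0 (max 1 (a 0))))
  refine .of_norm_bounded ((hsum (1 + x) (by linarith)).mul_right C) fun k => ?_
  rw [norm_mul, norm_of_nonneg (rpow_nonneg (hpos k) _)]
  exact mul_le_mul_of_nonneg_left (hC _ (rpow_mem_Icc_max hpos hmono hx0.le hx1 k))
    (rpow_nonneg (hpos k) _)

theorem tendsto_mul_tsum_rpow_one_add_mul {L : ℝ}
    (hres : Tendsto (fun s : ℝ => (s - 1) * ∑' k : ℕ, a k ^ s) (𝓝[>] (1 : ℝ)) (𝓝 L))
    {c : ℝ} (hc : 0 < c) :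
    Tendsto (fun x => x * ∑' k, a k ^ (1 + c * x)) (𝓝[>] 0) (𝓝 (L / c)) := by
  have hmap : Tendsto (fun x : ℝ => 1 + c * x) (𝓝[>] 0) (𝓝[>] 1) := by
    refine tendsto_nhdsWithin_of_tendsto_nhds_of_eventually_within _
      (((by fun_prop : Continuous fun x : ℝ => 1 + c * x).tendsto' 0 1 (by simp)).mono_left
        nhdsWithin_le_nhds) ?_
    filter_upwards [self_mem_nhdsWithin] with x (hx : 0 < x)
    simpa using mul_pos hc hx
  refine ((hres.comp hmap).div_const c).congr fun x => ?_
  simp only [Function.comp_apply, add_sub_cancel_left]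
  field_simp

theorem tendsto_mul_tsum_rpow_mul_eval (hpos : ∀ k, 0 ≤ a k) (hmono : Antitone a)
    (hsum : ∀ s : ℝ, 1 < s → Summable fun k => a k ^ s) {L : ℝ}
    (hres : Tendsto (fun s : ℝ => (s - 1) * ∑' k : ℕ, a k ^ s) (𝓝[>] (1 : ℝ)) (𝓝 L))
    (q : ℝ[X]) :
    Tendsto (fun x => x * ∑' k, a k ^ (1 + x) * q.eval (a k ^ x)) (𝓝[>] 0)
      (𝓝 (L * ∫ t in (0 : ℝ)..1, q.eval t)) := by
  induction q using Polynomial.induction_on' with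
  | add p q hp hq =>
    simp only [Polynomial.eval_add]
    rw [intervalIntegral.integral_add (p.continuous.intervalIntegrable _ _)
      (q.continuous.intervalIntegrable _ _), mul_add]
    refine (hp.add hq).congr' ?_
    filter_upwards [Ioc_mem_nhdsGT one_pos] with x hx
    rw [← mul_add, ← (summable_rpow_mul_eval hpos hmono hsum hx.1 hx.2 p).tsum_add
      (summable_rpow_mul_eval hpos hmono hsum hx.1 hx.2 q)]
    simp only [mul_add]
  | monomial n c =>
    have hint : ∫ t in (0 : ℝ)..1, (Polynomial.monomial n c).eval t = c / (n + 1) := by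
      simp [div_eq_mul_inv]
    rw [hint]
    have hlim := (tendsto_mul_tsum_rpow_one_add_mul hres (c := n + 1) (by positivity)).const_mul c
    rw [show L * (c / (n + 1)) = c * (L / (n + 1)) by ring]
    refine hlim.congr' ?_
    filter_upwards [self_mem_nhdsWithin] with x (hx : 0 < x)
    simp_rw [Polynomial.eval_monomial, ← tsum_mul_left]
    congr 1 with k
    rw [← rpow_one_add_mul_pow (hpos k) hx]
    ring

end MomentLimits

-- The denominator is `max t α` rather than `t` so that the function is continuous at `0`.
noncomputable def rampInv (α β t : ℝ) : ℝ := min 1 (max 0 ((t - α) / (β - α))) / max t α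

section RampInv

variable {α β t : ℝ}

theorem continuous_rampInv (hα : 0 < α) : Continuous (rampInv α β) :=
  Continuous.div (by fun_prop) (by fun_prop) fun t => (hα.trans_le (le_max_right t α)).ne'

theorem rampInv_nonneg (hα : 0 < α) (t : ℝ) : 0 ≤ rampInv α β t :=
  div_nonneg (le_min zero_le_one (le_max_left _ _)) (hα.le.trans (le_max_right _ _))

theorem rampInv_of_le (hαβ : α ≤ β) (ht : t ≤ α) : rampInv α β t = 0 := by
  rw [rampInv, max_eq_left (div_nonpos_of_nonpos_of_nonneg (by linarith) (by linarith)),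
    min_eq_right zero_le_one, zero_div]

theorem rampInv_of_ge (hαβ : α < β) (ht : β ≤ t) : rampInv α β t = t⁻¹ := by
  have h1 : 1 ≤ (t - α) / (β - α) := by rw [le_div_iff₀ (by linarith)]; linarith
  rw [rampInv, max_eq_right (zero_le_one.trans h1), min_eq_left h1, max_eq_left (by linarith),
    one_div]

theorem mul_rampInv_le_one (hα : 0 < α) (ht : 0 ≤ t) : t * rampInv α β t ≤ 1 := by
  have hden : 0 < max t α := hα.trans_le (le_max_right _ _)
  rw [rampInv, mul_div_assoc', div_le_one hden]
  exact mul_le_of_le_one_right ht (min_le_left _ _) |>.trans (le_max_left _ _)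

theorem rampInv_le_inv (hα : 0 < α) (ht : 0 < t) : rampInv α β t ≤ t⁻¹ := by
  rw [← one_div, le_div_iff₀' ht]
  exact mul_rampInv_le_one hα ht.le

theorem integral_rampInv_le (hα : 0 < α) (hαβ : α ≤ β) (hα1 : α ≤ 1) :
    ∫ t in (0 : ℝ)..1, rampInv α β t ≤ -log α := by
  have hint := (continuous_rampInv (β := β) hα).intervalIntegrable (μ := MeasureTheory.volume)
  rw [← intervalIntegral.integral_add_adjacent_intervals (hint 0 α) (hint α 1),
    intervalIntegral.integral_congr (g := fun _ => (0 : ℝ)) fun t ht => ?_,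
    intervalIntegral.integral_zero, zero_add, ← log_inv, ← one_div,
    ← integral_inv_of_pos hα one_pos]
  · refine intervalIntegral.integral_mono_on hα1 (hint α 1) ?_
      fun t ht => rampInv_le_inv hα (hα.trans_le ht.1)
    exact (continuousOn_inv₀.mono fun t ht => (hα.trans_le ht.1).ne').intervalIntegrable_of_Icc
      hα1
  · rw [uIcc_of_le hα.le] at ht
    exact rampInv_of_le hαβ ht.2

theorem neg_log_le_integral_rampInv (hα : 0 < α) (hαβ : α < β) (hβ1 : β ≤ 1) :
    -log β ≤ ∫ t in (0 : ℝ)..1, rampInv α β t := by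
  have hβ := hα.trans hαβ
  have hint := (continuous_rampInv (β := β) hα).intervalIntegrable (μ := MeasureTheory.volume)
  rw [← intervalIntegral.integral_add_adjacent_intervals (hint 0 β) (hint β 1),
    intervalIntegral.integral_congr (a := β) (g := fun t => t⁻¹) fun t ht => ?_,
    ← log_inv, ← one_div, ← integral_inv_of_pos hβ one_pos]
  · exact le_add_of_nonneg_left
      (intervalIntegral.integral_nonneg hβ.le fun t _ => rampInv_nonneg hα t)
  · rw [uIcc_of_le hβ1] at ht
    exact rampInv_of_ge hαβ ht.1

end RampInv

theorem exists_polynomial_le_le_add {f : ℝ → ℝ} {a b ε : ℝ} (hf : ContinuousOn f (Icc a b))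
    (hε : 0 < ε) : ∃ p : ℝ[X], ∀ t ∈ Icc a b, f t ≤ p.eval t ∧ p.eval t ≤ f t + ε := by
  obtain ⟨p, hp⟩ := exists_polynomial_near_of_continuousOn a b f hf (ε / 2) (half_pos hε)
  refine ⟨p + Polynomial.C (ε / 2), fun t ht => ?_⟩
  have := abs_lt.1 (hp t ht)
  simp only [Polynomial.eval_add, Polynomial.eval_C]
  constructor <;> linarith

theorem exists_polynomial_sub_le_le {f : ℝ → ℝ} {a b ε : ℝ} (hf : ContinuousOn f (Icc a b))
    (hε : 0 < ε) : ∃ p : ℝ[X], ∀ t ∈ Icc a b, f t - ε ≤ p.eval t ∧ p.eval t ≤ f t := by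
  obtain ⟨p, hp⟩ := exists_polynomial_le_le_add hf.neg hε
  refine ⟨-p, fun t ht => ?_⟩
  have := hp t ht
  simp only [Polynomial.eval_neg, Pi.neg_apply] at this ⊢
  constructor <;> linarith

theorem abs_integral_sub_integral_le {f g : ℝ → ℝ} (hf : Continuous f) (hg : Continuous g)
    {ε : ℝ} (h : ∀ t ∈ Icc (0 : ℝ) 1, |f t - g t| ≤ ε) :
    |(∫ t in (0 : ℝ)..1, f t) - ∫ t in (0 : ℝ)..1, g t| ≤ ε := by
  rw [← intervalIntegral.integral_sub (hf.intervalIntegrable _ _) (hg.intervalIntegrable _ _)]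
  simpa using intervalIntegral.norm_integral_le_of_norm_le_const (a := 0) (b := 1)
    (f := fun t => f t - g t) fun t ht =>
      h t (Ioc_subset_Icc_self (by rwa [uIoc_of_le zero_le_one] at ht))

theorem exists_polynomial_majorant {M L u : ℝ} (hM : 1 ≤ M) (hL : 0 ≤ L) (hu : L < u) :
    ∃ q : ℝ[X], (∀ t ∈ Icc 0 M, (if exp (-1) ≤ t then 1 else 0) ≤ t * q.eval t) ∧
      L * ∫ t in (0 : ℝ)..1, q.eval t < u := by
  obtain ⟨δ, hδu, hδ⟩ : ∃ δ : ℝ, L * (1 + 2 * δ) < u ∧ 0 < δ :=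
    ((((by fun_prop : Continuous fun δ : ℝ => L * (1 + 2 * δ)).tendsto' 0 L (by simp)).eventually
      (gt_mem_nhds hu)).filter_mono nhdsWithin_le_nhds |>.and
        (self_mem_nhdsWithin (s := Ioi 0))).exists
  have hα : 0 < exp (-(1 + δ)) := exp_pos _
  have hαβ : exp (-(1 + δ)) < exp (-1) := exp_lt_exp.2 (by linarith)
  obtain ⟨q, hq⟩ := exists_polynomial_le_le_add
    (continuous_rampInv (β := exp (-1)) hα).continuousOn hδ (a := 0) (b := M)
  refine ⟨q, fun t ht => ?_, ?_⟩
  · split_ifs with h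
    · calc (1 : ℝ) = t * rampInv (exp (-(1 + δ))) (exp (-1)) t := by
            rw [rampInv_of_ge hαβ h, mul_inv_cancel₀ ((exp_pos _).trans_le h).ne']
        _ ≤ t * q.eval t := mul_le_mul_of_nonneg_left (hq t ht).1 ht.1
    · exact mul_nonneg ht.1 ((rampInv_nonneg hα t).trans (hq t ht).1)
  · have hint := abs_integral_sub_integral_le q.continuous (continuous_rampInv (β := exp (-1)) hα)
      (ε := δ) fun t ht => abs_le.2 ⟨by linarith [(hq t ⟨ht.1, ht.2.trans hM⟩).1],
        by linarith [(hq t ⟨ht.1, ht.2.trans hM⟩).2]⟩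
    have hg := integral_rampInv_le hα hαβ.le (exp_le_one_iff.2 (by linarith))
    rw [log_exp] at hg
    calc L * ∫ t in (0 : ℝ)..1, q.eval t ≤ L * (1 + 2 * δ) := by
          gcongr; linarith [(abs_le.1 hint).2]
      _ < u := hδu

theorem exists_polynomial_minorant {M L u : ℝ} (hM : 1 ≤ M) (hL : 0 ≤ L) (hu : u < L) :
    ∃ q : ℝ[X], (∀ t ∈ Icc 0 M, t * q.eval t ≤ if exp (-1) ≤ t then 1 else 0) ∧
      u < L * ∫ t in (0 : ℝ)..1, q.eval t := by
  obtain ⟨δ, hδu, hδ⟩ : ∃ δ : ℝ, u < L * (1 - 2 * δ) ∧ δ ∈ Ioo 0 1 :=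
    ((((by fun_prop : Continuous fun δ : ℝ => L * (1 - 2 * δ)).tendsto' 0 L (by simp)).eventually
      (lt_mem_nhds hu)).filter_mono nhdsWithin_le_nhds |>.and (Ioo_mem_nhdsGT one_pos)).exists
  have hα : 0 < exp (-1) := exp_pos _
  have hαβ : exp (-1) < exp (-(1 - δ)) := exp_lt_exp.2 (by linarith [hδ.1])
  obtain ⟨q, hq⟩ := exists_polynomial_sub_le_le
    (continuous_rampInv (β := exp (-(1 - δ))) hα).continuousOn hδ.1 (a := 0) (b := M)
  refine ⟨q, fun t ht => ?_, ?_⟩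
  · split_ifs with h
    · exact (mul_le_mul_of_nonneg_left (hq t ht).2 ht.1).trans (mul_rampInv_le_one hα ht.1)
    · refine mul_nonpos_of_nonneg_of_nonpos ht.1 ((hq t ht).2.trans_eq ?_)
      exact rampInv_of_le hαβ.le (not_le.1 h).le
  · have hint := abs_integral_sub_integral_le q.continuous
      (continuous_rampInv (β := exp (-(1 - δ))) hα) (ε := δ) fun t ht =>
        abs_le.2 ⟨by linarith [(hq t ⟨ht.1, ht.2.trans hM⟩).1],
          by linarith [(hq t ⟨ht.1, ht.2.trans hM⟩).2, hδ.1]⟩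
    have hg := neg_log_le_integral_rampInv hα hαβ (exp_le_one_iff.2 (by linarith [hδ.2]))
    rw [log_exp] at hg
    calc u < L * (1 - 2 * δ) := hδu
      _ ≤ L * ∫ t in (0 : ℝ)..1, q.eval t := by gcongr; linarith [(abs_le.1 hint).1]

section Sandwich

variable {a : ℕ → ℝ}

theorem hasSum_mul_ite_le_rpow_inv (hpos : ∀ k, 0 ≤ a k) (hmono : Antitone a)
    (hlim : Tendsto a atTop (𝓝 0)) {y : ℝ} (hy : 0 < y) :
    HasSum (fun k => a k * if exp (-1) ≤ a k ^ y⁻¹ then 1 else 0)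
      (∑ k ∈ Finset.range (firstLt a (exp (-y))), a k) := by
  have key : ∀ k, exp (-1) ≤ a k ^ y⁻¹ ↔ k ∈ Finset.range (firstLt a (exp (-y))) := by
    intro k
    rw [Finset.mem_range, lt_firstLt_iff hmono hlim (exp_pos _),
      ← rpow_le_rpow_iff (exp_pos _).le (hpos k) (inv_pos.2 hy), ← exp_mul, neg_mul,
      mul_inv_cancel₀ hy.ne']
  rw [← Finset.sum_congr rfl fun k hk => show a k * (if exp (-1) ≤ a k ^ y⁻¹ then 1 else 0) = a k by
    rw [if_pos ((key k).2 hk), mul_one]]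
  exact hasSum_sum_of_ne_finset_zero fun k hk => by simp [key, hk]

theorem sum_range_firstLt_le_tsum (hpos : ∀ k, 0 ≤ a k) (hmono : Antitone a)
    (hlim : Tendsto a atTop (𝓝 0)) (hsum : ∀ s : ℝ, 1 < s → Summable fun k => a k ^ s)
    {y : ℝ} (hy : 1 ≤ y) {q : ℝ[X]}
    (hq : ∀ t ∈ Icc 0 (max 1 (a 0)), (if exp (-1) ≤ t then 1 else 0) ≤ t * q.eval t) :
    ∑ k ∈ Finset.range (firstLt a (exp (-y))), a k ≤
      ∑' k, a k ^ (1 + y⁻¹) * q.eval (a k ^ y⁻¹) := by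
  have hx0 : 0 < y⁻¹ := inv_pos.2 (zero_lt_one.trans_le hy)
  have hx1 : y⁻¹ ≤ 1 := inv_le_one_of_one_le₀ hy
  refine hasSum_le (fun k => ?_) (hasSum_mul_ite_le_rpow_inv hpos hmono hlim (inv_pos.1 hx0))
    (summable_rpow_mul_eval hpos hmono hsum hx0 hx1 q).hasSum
  rw [rpow_one_add' (hpos k) (by positivity), mul_assoc]
  exact mul_le_mul_of_nonneg_left (hq _ (rpow_mem_Icc_max hpos hmono hx0.le hx1 k)) (hpos k)

theorem tsum_le_sum_range_firstLt (hpos : ∀ k, 0 ≤ a k) (hmono : Antitone a)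
    (hlim : Tendsto a atTop (𝓝 0)) (hsum : ∀ s : ℝ, 1 < s → Summable fun k => a k ^ s)
    {y : ℝ} (hy : 1 ≤ y) {q : ℝ[X]}
    (hq : ∀ t ∈ Icc 0 (max 1 (a 0)), t * q.eval t ≤ if exp (-1) ≤ t then 1 else 0) :
    ∑' k, a k ^ (1 + y⁻¹) * q.eval (a k ^ y⁻¹) ≤
      ∑ k ∈ Finset.range (firstLt a (exp (-y))), a k := by
  have hx0 : 0 < y⁻¹ := inv_pos.2 (zero_lt_one.trans_le hy)
  have hx1 : y⁻¹ ≤ 1 := inv_le_one_of_one_le₀ hy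
  refine hasSum_le (fun k => ?_) (summable_rpow_mul_eval hpos hmono hsum hx0 hx1 q).hasSum
    (hasSum_mul_ite_le_rpow_inv hpos hmono hlim (inv_pos.1 hx0))
  rw [rpow_one_add' (hpos k) (by positivity), mul_assoc]
  exact mul_le_mul_of_nonneg_left (hq _ (rpow_mem_Icc_max hpos hmono hx0.le hx1 k)) (hpos k)

theorem tendsto_sum_range_firstLt_div (hpos : ∀ k, 0 ≤ a k) (hmono : Antitone a)
    (hlim : Tendsto a atTop (𝓝 0)) (hsum : ∀ s : ℝ, 1 < s → Summable fun k => a k ^ s)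
    {L : ℝ} (hres : Tendsto (fun s : ℝ => (s - 1) * ∑' k : ℕ, a k ^ s) (𝓝[>] (1 : ℝ)) (𝓝 L)) :
    Tendsto (fun y => (∑ k ∈ Finset.range (firstLt a (exp (-y))), a k) / y) atTop (𝓝 L) := by
  have hL : 0 ≤ L := ge_of_tendsto hres <| by
    filter_upwards [self_mem_nhdsWithin] with s (hs : 1 < s)
    exact mul_nonneg (by linarith) (tsum_nonneg fun k => rpow_nonneg (hpos k) s)
  have hpoly (q : ℝ[X]) := (tendsto_mul_tsum_rpow_mul_eval hpos hmono hsum hres q).comp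
    tendsto_inv_atTop_nhdsGT_zero
  refine tendsto_order.2 ⟨fun u hu => ?_, fun u hu => ?_⟩
  · obtain ⟨q, hq, hqu⟩ := exists_polynomial_minorant (le_max_left 1 (a 0)) hL hu
    filter_upwards [(hpoly q).eventually (lt_mem_nhds hqu), eventually_ge_atTop 1] with y hlt hy
    rw [div_eq_inv_mul]
    exact hlt.trans_le (mul_le_mul_of_nonneg_left
      (tsum_le_sum_range_firstLt hpos hmono hlim hsum hy hq) (by positivity))
  · obtain ⟨q, hq, hqu⟩ := exists_polynomial_majorant (le_max_left 1 (a 0)) hL hu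
    filter_upwards [(hpoly q).eventually (gt_mem_nhds hqu), eventually_ge_atTop 1] with y hlt hy
    rw [div_eq_inv_mul]
    exact (mul_le_mul_of_nonneg_left
      (sum_range_firstLt_le_tsum hpos hmono hlim hsum hy hq) (by positivity)).trans_lt hlt

end Sandwich

theorem nat_mul_rpow_le_tsum {a : ℕ → ℝ} (hpos : ∀ k, 0 ≤ a k) (hmono : Antitone a)
    {r : ℝ} (hr : 0 ≤ r) (hsum : Summable fun k => a k ^ r) (N : ℕ) :
    N * a N ^ r ≤ ∑' k, a k ^ r :=
  calc (N : ℝ) * a N ^ r = ∑ _k ∈ Finset.range N, a N ^ r := by simp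
    _ ≤ ∑ k ∈ Finset.range N, a k ^ r := Finset.sum_le_sum fun k hk =>
        rpow_le_rpow (hpos N) (hmono (Finset.mem_range.1 hk).le) hr
    _ ≤ ∑' k, a k ^ r := hsum.sum_le_tsum _ fun k _ => rpow_nonneg (hpos k) r

theorem eventually_lt_rpow_neg {a : ℕ → ℝ} (hpos : ∀ k, 0 ≤ a k) (hmono : Antitone a)
    (hsum : ∀ s : ℝ, 1 < s → Summable fun k => a k ^ s) {θ : ℝ} (hθ0 : 0 < θ) (hθ1 : θ < 1) :
    ∀ᶠ N : ℕ in atTop, a N < (N : ℝ) ^ (-θ) := by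
  -- any exponent `r > 1` with `θ * r < 1` works
  set r := 2 / (1 + θ)
  have hr : 1 < r := by rw [lt_div_iff₀ (by linarith)]; linarith
  have hθr : 0 < 1 - θ * r := by
    have : θ * r = 2 * θ / (1 + θ) := by ring
    rw [this, sub_pos, div_lt_one (by linarith)]; linarith
  have hgrow : Tendsto (fun N : ℕ => (N : ℝ) ^ (1 - θ * r)) atTop atTop :=
    (tendsto_rpow_atTop hθr).comp tendsto_natCast_atTop_atTop
  filter_upwards [hgrow.eventually_gt_atTop (∑' k, a k ^ r), eventually_gt_atTop 0]
    with N hC hN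
  by_contra! hle
  have hN' : (0 : ℝ) < N := by exact_mod_cast hN
  have : (N : ℝ) ^ (1 - θ * r) ≤ N * a N ^ r :=
    calc (N : ℝ) ^ (1 - θ * r) = N * ((N : ℝ) ^ (-θ)) ^ r := by
          rw [← rpow_mul hN'.le, rpow_sub hN', rpow_one, neg_mul, rpow_neg hN'.le]
          ring
      _ ≤ N * a N ^ r := by gcongr
  linarith [nat_mul_rpow_le_tsum hpos hmono (by linarith) (hsum r hr) N]

theorem tendsto_of_mul_bounds {α : Type*} {l : Filter α} {f : α → ℝ} {L : ℝ}
    (hup : ∀ s : ℝ, 1 < s → ∃ g : α → ℝ, Tendsto g l (𝓝 (s * L)) ∧ ∀ᶠ x in l, f x ≤ g x)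
    (hlo : ∀ θ ∈ Ioo (0 : ℝ) 1,
      ∃ g : α → ℝ, Tendsto g l (𝓝 (θ * L)) ∧ ∀ᶠ x in l, g x ≤ f x) :
    Tendsto f l (𝓝 L) := by
  have hcont : Tendsto (fun s : ℝ => s * L) (𝓝 1) (𝓝 L) := by
    simpa using (tendsto_id (x := 𝓝 (1 : ℝ))).mul_const L
  refine tendsto_order.2 ⟨fun u hu => ?_, fun u hu => ?_⟩
  · obtain ⟨θ, huθ, hθ⟩ := ((hcont.mono_left nhdsWithin_le_nhds).eventually
      (lt_mem_nhds hu) |>.and (Ioo_mem_nhdsLT zero_lt_one)).exists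
    obtain ⟨g, hg, hgf⟩ := hlo θ hθ
    filter_upwards [hg.eventually (lt_mem_nhds huθ), hgf] with x h1 h2 using h1.trans_le h2
  · obtain ⟨s, hsu, hs⟩ := ((hcont.mono_left nhdsWithin_le_nhds).eventually
      (gt_mem_nhds hu) |>.and (self_mem_nhdsWithin (s := Ioi 1))).exists
    obtain ⟨g, hg, hfg⟩ := hup s hs
    filter_upwards [hg.eventually (gt_mem_nhds hsu), hfg] with x h1 h2 using h2.trans_lt h1

theorem tendsto_comp_const_mul_log_div_log {T : ℝ → ℝ} {L : ℝ}
    (hT : Tendsto (fun y => T y / y) atTop (𝓝 L)) {c : ℝ} (hc : 0 < c) :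
    Tendsto (fun N : ℕ => T (c * log N) / log N) atTop (𝓝 (c * L)) := by
  have hlog : Tendsto (fun N : ℕ => log N) atTop atTop :=
    tendsto_log_atTop.comp tendsto_natCast_atTop_atTop
  refine ((hT.comp (hlog.const_mul_atTop hc)).const_mul c).congr' ?_
  filter_upwards [hlog.eventually_ne_atTop 0] with N hN
  simp only [Function.comp_apply]
  field_simp

theorem tendsto_sum_range_div_log {a : ℕ → ℝ} (hpos : ∀ k, 0 ≤ a k) (hmono : Antitone a)
    (hlim : Tendsto a atTop (𝓝 0)) (hsum : ∀ s : ℝ, 1 < s → Summable fun k => a k ^ s)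
    {L : ℝ}
    (hT : Tendsto (fun y => (∑ k ∈ Finset.range (firstLt a (exp (-y))), a k) / y) atTop (𝓝 L)) :
    Tendsto (fun N : ℕ => (1 / log N) * ∑ k ∈ Finset.range N, a k) atTop (𝓝 L) := by
  set T := fun y => ∑ k ∈ Finset.range (firstLt a (exp (-y))), a k
  have hlog : Tendsto (fun N : ℕ => log N) atTop atTop :=
    tendsto_log_atTop.comp tendsto_natCast_atTop_atTop
  refine tendsto_of_mul_bounds (fun s hs => ⟨fun N => (T (s * log N) + 1) / log N, ?_, ?_⟩)
    fun θ hθ => ⟨fun N => T (θ * log N) / log N,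
      tendsto_comp_const_mul_log_div_log hT hθ.1, ?_⟩
  · simp only [add_div]
    simpa using (tendsto_comp_const_mul_log_div_log hT (zero_lt_one.trans hs)).add
      (tendsto_inv_atTop_zero.comp hlog)
  · filter_upwards [eventually_gt_atTop 1] with N hN
    have hN0 : (0 : ℝ) < N := by positivity
    have htail : (N : ℝ) * exp (-(s * log N)) ≤ 1 := by
      calc (N : ℝ) * exp (-(s * log N)) ≤ N * exp (-log N) := by
            gcongr; nlinarith [log_nonneg (Nat.one_le_cast.2 hN.le)]
        _ = 1 := by rw [exp_neg, exp_log hN0, mul_inv_cancel₀ hN0.ne']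
    rw [one_div_mul_eq_div]
    gcongr
    exact (sum_range_le_sum_range_firstLt_add hpos hmono hlim (exp_pos _) N).trans (by gcongr)
  · filter_upwards [eventually_lt_rpow_neg hpos hmono hsum hθ.1 hθ.2, eventually_gt_atTop 0]
      with N hN hNpos
    have hN0 : (0 : ℝ) < N := Nat.cast_pos.2 hNpos
    rw [one_div_mul_eq_div]
    gcongr
    refine sum_range_firstLt_le_sum_range hpos hmono hlim (exp_pos _) ?_
    rwa [rpow_def_of_pos hN0, mul_neg, mul_comm] at hN

/-- Tauberian criterion (scalar version): if `a` is nonnegative, nonincreasing, tends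
to `0`, `∑ a_k^s < ∞` for all `s > 1` and `lim_{s→1⁺} (s-1) ∑ a_k^s = L`, then
`(1/log N) ∑_{k<N} a_k → L`. -/
theorem tauberian_criterion (a : ℕ → ℝ) (hpos : ∀ k, 0 ≤ a k) (hmono : Antitone a)
    (hlim : Tendsto a atTop (𝓝 0))
    (hsum : ∀ s : ℝ, 1 < s → Summable fun k => a k ^ s) (L : ℝ)
    (hres : Tendsto (fun s : ℝ => (s - 1) * ∑' k : ℕ, a k ^ s) (𝓝[>] (1 : ℝ)) (𝓝 L)) :
    Tendsto (fun N : ℕ => (1 / Real.log N) * ∑ k ∈ Finset.range N, a k)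
      atTop (𝓝 L) :=
  tendsto_sum_range_div_log hpos hmono hlim hsum
    (tendsto_sum_range_firstLt_div hpos hmono hlim hsum hres)
end
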